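/- d-separation in a HEDG satisfies the compositional graphoid axioms: symmetry, decomposition, weak union, contraction, intersection (for pairwise disjoint sets), and composition. In particular, for all X,Y,Z,W ⊆ V: (X ⟂_G^d Y | Z) ∧ (X ⟂_G^d W | Z) implies X ⟂_G^d Y∪W | Z, and (X ⟂_G^d Y | W∪Z) ∧ (X ⟂_G^d W | Z) implies X ⟂_G^d Y∪W | Z. -/

import Mathlib

/-! Each axiom is proved by walk surgery: a d-open walk refuting the conclusion is turned into
one refuting a hypothesis. Reversing a walk gives symmetry. Cutting a d-open walk into
`Y ∪ W` at its first non-collider in `Y ∪ W` gives contraction and intersection: the prefix has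
no non-collider in `Y ∪ W`. For weak union, a `(W ∪ Z)`-open walk stays `Z`-open up to its first
collider `c` that is not an ancestor of `Z`; there it is continued along a directed path from
`c` to `W ∪ Z`, none of whose nodes is an ancestor of `Z`, so that it ends in `W`. -/

namespace HedgPaper

variable {V : Type*}

/-- directed reachability: existence of a directed path (possibly trivial). -/
def Reach (E : V → V → Prop) : V → V → Prop := Relation.ReflTransGen E

/-- `v` and `w` lie in the same strongly connected component. -/
def InSC (E : V → V → Prop) (v w : V) : Prop := Reach E v w ∧ Reach E w v

/-- the set of ancestors of a set `Z`. -/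
def AncSet (E : V → V → Prop) (Z : Set V) : Set V := {v | ∃ z ∈ Z, Reach E v z}

/-- `H` is a simplicial complex over `V`. -/
def IsSimplicial (H : Set (Set V)) : Prop :=
  (∀ v : V, ({v} : Set V) ∈ H) ∧ ∀ F ∈ H, ∀ F' : Set V, F' ⊆ F → F' ∈ H

/-- direction of an edge on a path: forward, backward, or bidirected. -/
inductive EDir : Type
  | fwd | bwd | bi

/-- one step of a walk in a HEDG. -/
structure Step (V : Type*) where
  src : V
  dir : EDir
  dst : V

/-- the step is an actual (directed or bidirected) edge of the HEDG `(V,E,H)`. -/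
def Step.Valid (E : V → V → Prop) (H : Set (Set V)) (s : Step V) : Prop :=
  match s.dir with
  | .fwd => E s.src s.dst
  | .bwd => E s.dst s.src
  | .bi  => s.src ≠ s.dst ∧ ({s.src, s.dst} : Set V) ∈ H

/-- the step has an arrowhead at its destination. -/
def Step.HeadAtDst (s : Step V) : Prop := s.dir = EDir.fwd ∨ s.dir = EDir.bi

/-- the step has an arrowhead at its source. -/
def Step.HeadAtSrc (s : Step V) : Prop := s.dir = EDir.bwd ∨ s.dir = EDir.bi

/-- `l` is a walk (path, possibly with repeated nodes) from `x` to `y` in `(V,E,H)`. -/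
def IsWalk (E : V → V → Prop) (H : Set (Set V)) : List (Step V) → V → V → Prop
  | [], x, y => x = y
  | s :: l, x, y => s.src = x ∧ s.Valid E H ∧ IsWalk E H l s.dst y

/-- all interior nodes of the walk are `Z`-open in the d-separation sense:
colliders are ancestors of `Z`, non-colliders are not in `Z`. -/
def DInteriorOpen (E : V → V → Prop) (Z : Set V) : List (Step V) → Prop
  | [] => True
  | [_] => True
  | s :: t :: l =>
      ((s.HeadAtDst ∧ t.HeadAtSrc) → s.dst ∈ AncSet E Z) ∧
      (¬ (s.HeadAtDst ∧ t.HeadAtSrc) → s.dst ∉ Z) ∧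
      DInteriorOpen E Z (t :: l)

/-- `X` is d-separated from `Y` given `Z` in the HEDG `(V,E,H)`:
every walk from `X` to `Y` is `Z`-blocked. -/
def DSep (E : V → V → Prop) (H : Set (Set V)) (X Y Z : Set V) : Prop :=
  ∀ x ∈ X, ∀ y ∈ Y, ∀ l : List (Step V),
    IsWalk E H l x y → ¬ (x ∉ Z ∧ y ∉ Z ∧ DInteriorOpen E Z l)

/-- all interior nodes of the walk are `Z`-σ-open: colliders are ancestors of `Z`,
and a non-collider in `Z` must not point (via a directed edge of the path) to a
node outside of its strongly connected component. -/
def SigmaInteriorOpen (E : V → V → Prop) (Z : Set V) : List (Step V) → Prop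
  | [] => True
  | [_] => True
  | s :: t :: l =>
      ((s.HeadAtDst ∧ t.HeadAtSrc) → s.dst ∈ AncSet E Z) ∧
      (¬ (s.HeadAtDst ∧ t.HeadAtSrc) →
        ¬ (s.dst ∈ Z ∧ ((¬ s.HeadAtDst ∧ ¬ InSC E s.dst s.src) ∨
                        (¬ t.HeadAtSrc ∧ ¬ InSC E s.dst t.dst)))) ∧
      SigmaInteriorOpen E Z (t :: l)

/-- `X` is σ-separated from `Y` given `Z` in the HEDG `(V,E,H)`. -/
def SigmaSep (E : V → V → Prop) (H : Set (Set V)) (X Y Z : Set V) : Prop :=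
  ∀ x ∈ X, ∀ y ∈ Y, ∀ l : List (Step V),
    IsWalk E H l x y → ¬ (x ∉ Z ∧ y ∉ Z ∧ SigmaInteriorOpen E Z l)

/-- directed edges of the marginalization of `(V,E,H)` w.r.t. (i.e. after removing) `U`:
`a → b` iff there is a directed path `a → u₁ → ⋯ → u_r → b` in `G` with all `uᵢ ∈ U`. -/
def MargE (E : V → V → Prop) (U : Set V) : V → V → Prop :=
  fun a b => a ∉ U ∧ b ∉ U ∧
    ∃ c, Relation.ReflTransGen (fun x y => E x y ∧ y ∈ U) a c ∧ E c b

/-- hyperedges of the marginalization of `(V,E,H)` w.r.t. `U`. -/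
def MargH (E : V → V → Prop) (H : Set (Set V)) (U : Set V) : Set (Set V) :=
  {F' | (∀ v ∈ F', v ∉ U) ∧ ∃ F ∈ H, F ⊆ F' ∪ U ∧
    ∀ v ∈ F', (v ∈ F ∧ v ∉ U) ∨
      ∃ u ∈ F ∩ U, ∃ c, Relation.ReflTransGen (fun x y => E x y ∧ y ∈ U) u c ∧ E c v}

/-- bidirected-edge relation induced by the hyperedges. -/
def BiRel (H : Set (Set V)) : V → V → Prop :=
  fun x y => x ≠ y ∧ ({x, y} : Set V) ∈ H

/-- (generalized) moralization of a HEDG: `v — w` iff there are `a`, `b` with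
`v ∈ {a} ∪ Pa(a)`, `w ∈ {b} ∪ Pa(b)` and a bidirected chain `a ↔ ⋯ ↔ b`. -/
def MoralE (E : V → V → Prop) (H : Set (Set V)) : V → V → Prop :=
  fun v w => v ≠ w ∧ ∃ a b, (v = a ∨ E v a) ∧ (w = b ∨ E w b) ∧
    Relation.ReflTransGen (BiRel H) a b

/-- moralization of a directed graph: undirected versions of the directed edges plus
edges between distinct parents of a common child. -/
def MoralDirE (E : V → V → Prop) : V → V → Prop :=
  fun v w => v ≠ w ∧ (E v w ∨ E w v ∨ ∃ c, E v c ∧ E w c)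

/-- marginalization of an undirected graph `A` w.r.t. `W`: `a — b` iff there is a path
from `a` to `b` with all intermediate nodes in `W`. -/
def MargUnd (A : V → V → Prop) (W : Set V) : V → V → Prop :=
  fun a b => a ∉ W ∧ b ∉ W ∧ a ≠ b ∧
    ∃ c, Relation.ReflTransGen (fun x y => A x y ∧ y ∈ W) a c ∧ A c b

/-- separation in an undirected graph: every path from `X` to `Y` contains a node of
`Z` (including the endnodes). -/
def USep (A : V → V → Prop) (X Y Z : Set V) : Prop :=
  ∀ x ∈ X, ∀ y ∈ Y,
    ¬ (x ∉ Z ∧ Relation.ReflTransGen (fun a b => A a b ∧ b ∉ Z) x y)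

/-- edges of the induced sub-HEDG on `A`. -/
def InducedE (E : V → V → Prop) (A : Set V) : V → V → Prop :=
  fun a b => a ∈ A ∧ b ∈ A ∧ E a b

/-- hyperedges of the induced sub-HEDG on `A`. -/
def InducedH (H : Set (Set V)) (A : Set V) : Set (Set V) := {F | F ∈ H ∧ F ⊆ A}

/-- `F` is an inclusion-maximal hyperedge of `H`. -/
def MaximalHyperedge (H : Set (Set V)) (F : Set V) : Prop :=
  F ∈ H ∧ ∀ F' ∈ H, F ⊆ F' → F' = F

/-- edges of the augmented directed graph of a HEDG: the original directed edges plus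
`e_F → v` for every maximal hyperedge `F` and every `v ∈ F`. -/
def AugE (E : V → V → Prop) (H : Set (Set V)) :
    V ⊕ {F : Set V // MaximalHyperedge H F} →
    V ⊕ {F : Set V // MaximalHyperedge H F} → Prop
  | .inl v, .inl w => E v w
  | .inr F, .inl v => v ∈ F.1
  | _, _ => False

/-- the trivial simplicial complex (only subsingleton hyperedges), making a directed
graph a HEDG without bidirected edges. -/
def TrivialH (W : Type*) : Set (Set W) := {F | Set.Subsingleton F}

/-- directed edges of the acyclification of a HEDG. -/
def AcyE (E : V → V → Prop) : V → V → Prop :=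
  fun v w => ¬ InSC E v w ∧ ∃ w', InSC E w w' ∧ E v w'

/-- hyperedges of the acyclification of a HEDG. -/
def AcyH (E : V → V → Prop) (H : Set (Set V)) : Set (Set V) :=
  {F' | ∃ F ∈ H, ∀ x ∈ F', ∃ v ∈ F, InSC E v x}

theorem _root_.List.IsChain.and {α : Type*} {R S : α → α → Prop} {l : List α}
    (hR : l.IsChain R) (hS : l.IsChain S) : l.IsChain fun a b => R a b ∧ S a b := by
  induction hR with
  | nil => exact .nil
  | singleton a => exact .singleton a
  | cons_cons hab _ ih =>
    rw [List.isChain_cons_cons] at hS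
    exact .cons_cons ⟨hab, hS.1⟩ (ih hS.2)

theorem _root_.List.isChain_or_exists_first_not_rel {α : Type*} (R : α → α → Prop) :
    ∀ l : List α, l.IsChain R ∨
      ∃ l₁ a b l₂, l = l₁ ++ a :: b :: l₂ ∧ (l₁ ++ [a]).IsChain R ∧ ¬ R a b
  | [] => .inl .nil
  | [a] => .inl (.singleton a)
  | a :: b :: l => by
    by_cases hab : R a b
    · rcases List.isChain_or_exists_first_not_rel R (b :: l) with
        hl | ⟨l₁, c, d, l₂, heq, hpre, hcd⟩
      · exact .inl (.cons_cons hab hl)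
      · refine .inr ⟨a :: l₁, c, d, l₂, by simp [heq], ?_, hcd⟩
        cases l₁ with
        | nil => cases heq; exact List.isChain_pair.mpr hab
        | cons e l₁ =>
          obtain ⟨rfl, -⟩ := List.cons_eq_cons.mp heq
          exact .cons_cons hab hpre
    · exact .inr ⟨[], a, b, l, rfl, .singleton a, hab⟩

section Walks

variable {E : V → V → Prop} {H : Set (Set V)} {A A' N N' : Set V}
  {l l₁ l₂ : List (Step V)} {x y : V}

def OpenPair (A N : Set V) (s t : Step V) : Prop :=
  (s.HeadAtDst ∧ t.HeadAtSrc → s.dst ∈ A) ∧ (¬ (s.HeadAtDst ∧ t.HeadAtSrc) → s.dst ∉ N)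

/-- d-openness given `Z` is the case `A = AncSet E Z`, `N = Z`; keeping `A` and `N` apart lets
walk surgery change one without the other. -/
structure OpenWalk (E : V → V → Prop) (H : Set (Set V)) (A N : Set V) (l : List (Step V))
    (x y : V) : Prop where
  isWalk : IsWalk E H l x y
  left_notMem : x ∉ N
  right_notMem : y ∉ N
  isChain : l.IsChain (OpenPair A N)

theorem OpenPair.mono {s t : Step V} (hA : A ⊆ A') (hN : N' ⊆ N) (h : OpenPair A N s t) :
    OpenPair A' N' s t :=
  ⟨fun hc => hA (h.1 hc), fun hc hs => h.2 hc (hN hs)⟩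

theorem openPair_of_dir_eq_fwd {s t : Step V} (ht : t.dir = .fwd) (hs : s.dst ∉ N) :
    OpenPair A N s t :=
  ⟨fun hc => by simp [Step.HeadAtSrc, ht] at hc, fun _ => hs⟩

theorem OpenWalk.mono (hA : A ⊆ A') (hN : N' ⊆ N) (h : OpenWalk E H A N l x y) :
    OpenWalk E H A' N' l x y :=
  ⟨h.isWalk, fun hx => h.left_notMem (hN hx), fun hy => h.right_notMem (hN hy),
    h.isChain.imp fun _ _ => OpenPair.mono hA hN⟩

theorem dInteriorOpen_iff_isChain {Z : Set V} :
    ∀ l : List (Step V), DInteriorOpen E Z l ↔ l.IsChain (OpenPair (AncSet E Z) Z)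
  | [] | [_] => by simp [DInteriorOpen]
  | s :: t :: l => by
    rw [List.isChain_cons_cons, ← dInteriorOpen_iff_isChain (t :: l)]
    simp only [DInteriorOpen, OpenPair, and_assoc]

theorem dSep_iff_forall_not_openWalk {X Y Z : Set V} :
    DSep E H X Y Z ↔ ∀ x ∈ X, ∀ y ∈ Y, ∀ l, ¬ OpenWalk E H (AncSet E Z) Z l x y := by
  refine forall₄_congr fun x _ y _ => forall_congr' fun l => ?_
  rw [dInteriorOpen_iff_isChain]
  exact ⟨fun h hl => h hl.isWalk ⟨hl.left_notMem, hl.right_notMem, hl.isChain⟩,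
    fun h hw hl => h ⟨hw, hl.1, hl.2.1, hl.2.2⟩⟩

theorem openWalk_nil {x : V} (hx : x ∉ N) : OpenWalk E H A N [] x x :=
  ⟨rfl, hx, hx, .nil⟩

theorem isWalk_append_iff :
    IsWalk E H (l₁ ++ l₂) x y ↔ ∃ m, IsWalk E H l₁ x m ∧ IsWalk E H l₂ m y := by
  induction l₁ generalizing x with
  | nil => simp [IsWalk]
  | cons s l₁ ih => simp [IsWalk, ih, and_assoc]

theorem IsWalk.append_cons_prefix {s : Step V} (h : IsWalk E H (l₁ ++ s :: l₂) x y) :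
    IsWalk E H (l₁ ++ [s]) x s.dst := by
  obtain ⟨m, h₁, hs, hv, -⟩ := isWalk_append_iff.mp h
  exact isWalk_append_iff.mpr ⟨m, h₁, hs, hv, rfl⟩

theorem IsWalk.dst_eq_of_mem_getLast? (h : IsWalk E H l x y) : ∀ s ∈ l.getLast?, s.dst = y := by
  induction l generalizing x with
  | nil => simp
  | cons s l ih =>
    cases l with
    | nil => simpa [IsWalk] using h.2.2
    | cons t l => simpa using ih h.2.2

theorem IsWalk.isChain_dst_eq_src (h : IsWalk E H l x y) :
    l.IsChain fun s t => s.dst = t.src := by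
  induction l generalizing x with
  | nil => exact .nil
  | cons s l ih =>
    refine List.isChain_cons.mpr ⟨fun t ht => ?_, ih h.2.2⟩
    cases l with
    | nil => simp at ht
    | cons t' l => cases ht; exact h.2.2.1.symm

def EDir.rev : EDir → EDir
  | .fwd => .bwd
  | .bwd => .fwd
  | .bi => .bi

def Step.rev (s : Step V) : Step V := ⟨s.dst, s.dir.rev, s.src⟩

theorem Step.Valid.rev {s : Step V} (h : s.Valid E H) : s.rev.Valid E H := by
  obtain ⟨a, d, b⟩ := s
  cases d with
  | fwd | bwd => exact h
  | bi => exact ⟨h.1.symm, Set.pair_comm a b ▸ h.2⟩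

theorem Step.headAtDst_rev {s : Step V} : s.rev.HeadAtDst ↔ s.HeadAtSrc := by
  obtain ⟨a, d, b⟩ := s
  cases d <;> simp [Step.rev, EDir.rev, Step.HeadAtDst, Step.HeadAtSrc]

theorem Step.headAtSrc_rev {s : Step V} : s.rev.HeadAtSrc ↔ s.HeadAtDst := by
  obtain ⟨a, d, b⟩ := s
  cases d <;> simp [Step.rev, EDir.rev, Step.HeadAtDst, Step.HeadAtSrc]

theorem OpenPair.rev {s t : Step V} (hst : s.dst = t.src) (h : OpenPair A N s t) :
    OpenPair A N t.rev s.rev := by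
  have hdst : t.rev.dst = s.dst := hst.symm
  simp only [OpenPair, Step.headAtDst_rev, Step.headAtSrc_rev, hdst] at h ⊢
  exact ⟨fun hc => h.1 hc.symm, fun hc => h.2 fun hc' => hc hc'.symm⟩

theorem IsWalk.reverse (h : IsWalk E H l x y) : IsWalk E H (l.map Step.rev).reverse y x := by
  induction l generalizing x with
  | nil => exact h.symm
  | cons s l ih =>
    rw [List.map_cons, List.reverse_cons]
    exact isWalk_append_iff.mpr ⟨s.dst, ih h.2.2, rfl, h.2.1.rev, h.1⟩

theorem OpenWalk.reverse (h : OpenWalk E H A N l x y) :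
    OpenWalk E H A N (l.map Step.rev).reverse y x := by
  refine ⟨h.isWalk.reverse, h.right_notMem, h.left_notMem, ?_⟩
  rw [List.isChain_reverse, List.isChain_map]
  exact (h.isWalk.isChain_dst_eq_src.and h.isChain).imp fun _ _ hst => hst.2.rev hst.1

theorem OpenWalk.exists_prefix_isChain_union (S : Set V) (h : OpenWalk E H A N l x y)
    (hy : y ∈ S) :
    ∃ v ∈ S, ∃ l', OpenWalk E H A N l' x v ∧ l'.IsChain (OpenPair A (S ∪ N)) := by
  rcases l.isChain_or_exists_first_not_rel (OpenPair A (S ∪ N)) with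
    hl | ⟨l₁, s, t, l₂, rfl, hpre, hst⟩
  · exact ⟨y, hy, l, h, hl⟩
  have hst' : OpenPair A N s t := (List.isChain_append_cons_cons.mp h.isChain).2.1
  have hcol : ¬ (s.HeadAtDst ∧ t.HeadAtSrc) := fun hc =>
    hst ⟨fun _ => hst'.1 hc, fun hnc => absurd hc hnc⟩
  have hS : s.dst ∈ S := by
    by_contra hS
    exact hst ⟨fun hc => absurd hc hcol, fun _ hm => hm.elim hS (hst'.2 hcol)⟩
  exact ⟨s.dst, hS, l₁ ++ [s], ⟨h.isWalk.append_cons_prefix, h.left_notMem, hst'.2 hcol,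
    hpre.imp fun _ _ => OpenPair.mono subset_rfl Set.subset_union_right⟩, hpre⟩

theorem OpenWalk.union_of_isChain {S M : Set V} (h : OpenWalk E H A N l x y)
    (hS : l.IsChain (OpenPair A (S ∪ N))) (hMS : M ⊆ S) (hx : x ∉ M) (hy : y ∉ M) :
    OpenWalk E H A (M ∪ N) l x y :=
  ⟨h.isWalk, fun hm => hm.elim hx h.left_notMem, fun hm => hm.elim hy h.right_notMem,
    hS.imp fun _ _ => OpenPair.mono subset_rfl (Set.union_subset_union_left N hMS)⟩

theorem subset_ancSet (Z : Set V) : Z ⊆ AncSet E Z := fun z hz => ⟨z, hz, .refl⟩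

theorem ancSet_mono {Z Z' : Set V} (h : Z ⊆ Z') : AncSet E Z ⊆ AncSet E Z' :=
  fun _ ⟨z, hz, hr⟩ => ⟨z, h hz, hr⟩

theorem mem_ancSet_of_rel {Z : Set V} {v w : V} (hvw : E v w) (hw : w ∈ AncSet E Z) :
    v ∈ AncSet E Z :=
  let ⟨z, hz, hr⟩ := hw
  ⟨z, hz, .head hvw hr⟩

theorem OpenWalk.exists_extend_to_mem {W Z : Set V} {c : V}
    (h : OpenWalk E H (AncSet E Z) Z l x c) (hc : c ∈ AncSet E (W ∪ Z))
    (hcZ : c ∉ AncSet E Z) : ∃ w ∈ W, ∃ l', OpenWalk E H (AncSet E Z) Z l' x w := by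
  obtain ⟨z, hz, hr⟩ := hc
  induction hr using Relation.ReflTransGen.head_induction_on generalizing l with
  | refl => exact ⟨z, hz.resolve_right fun hzZ => hcZ (subset_ancSet Z hzZ), l, h⟩
  | @head c b hcb _ ih =>
    have hbZ : b ∉ AncSet E Z := fun hb => hcZ (mem_ancSet_of_rel hcb hb)
    have hstep : IsWalk E H [⟨c, .fwd, b⟩] c b := ⟨rfl, hcb, rfl⟩
    refine ih ⟨isWalk_append_iff.mpr ⟨c, h.isWalk, hstep⟩, h.left_notMem,
      fun hb => hbZ (subset_ancSet Z hb), h.isChain.append (.singleton _) ?_⟩ hbZ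
    intro s hs _ ht
    cases ht
    exact openPair_of_dir_eq_fwd rfl (h.isWalk.dst_eq_of_mem_getLast? s hs ▸ h.right_notMem)

theorem OpenWalk.exists_of_union {W Z : Set V}
    (h : OpenWalk E H (AncSet E (W ∪ Z)) (W ∪ Z) l x y) :
    ∃ v, (v = y ∨ v ∈ W) ∧ ∃ l', OpenWalk E H (AncSet E Z) Z l' x v := by
  rcases l.isChain_or_exists_first_not_rel (OpenPair (AncSet E Z) Z) with
    hl | ⟨l₁, s, t, l₂, rfl, hpre, hst⟩
  · exact ⟨y, .inl rfl, l, h.isWalk, fun hx => h.left_notMem (.inr hx),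
      fun hy => h.right_notMem (.inr hy), hl⟩
  have hst' : OpenPair (AncSet E (W ∪ Z)) (W ∪ Z) s t :=
    (List.isChain_append_cons_cons.mp h.isChain).2.1
  have hcol : s.HeadAtDst ∧ t.HeadAtSrc := by
    by_contra hnc
    exact hst ⟨fun hc => absurd hc hnc, fun _ hz => hst'.2 hnc (.inr hz)⟩
  have hanc : s.dst ∉ AncSet E Z := fun ha => hst ⟨fun _ => ha, fun hnc => absurd hcol hnc⟩
  obtain ⟨w, hw, l', hl'⟩ := OpenWalk.exists_extend_to_mem
    ⟨h.isWalk.append_cons_prefix, fun hx => h.left_notMem (.inr hx),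
      fun hs => hanc (subset_ancSet Z hs),
      hpre⟩ (hst'.1 hcol) hanc
  exact ⟨w, .inr hw, l', hl'⟩

theorem DSep.symm {X Y Z : Set V} (h : DSep E H X Y Z) : DSep E H Y X Z := by
  rw [dSep_iff_forall_not_openWalk] at h ⊢
  exact fun y hy x hx l hl => h x hx y hy _ hl.reverse

theorem DSep.mono_right {X Y Y' Z : Set V} (hY : Y' ⊆ Y) (h : DSep E H X Y Z) :
    DSep E H X Y' Z :=
  fun x hx y hy => h x hx y (hY hy)

theorem DSep.weak_union {X Y W Z : Set V} (h : DSep E H X (Y ∪ W) Z) :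
    DSep E H X Y (W ∪ Z) := by
  rw [dSep_iff_forall_not_openWalk] at h ⊢
  intro x hx y hy l hl
  obtain ⟨v, hv, l', hl'⟩ := hl.exists_of_union
  exact h x hx v (hv.elim (fun hvy => .inl (hvy ▸ hy)) .inr) l' hl'

theorem DSep.contraction {X Y W Z : Set V} (h₁ : DSep E H X Y (W ∪ Z))
    (h₂ : DSep E H X W Z) : DSep E H X (Y ∪ W) Z := by
  rw [dSep_iff_forall_not_openWalk] at h₁ h₂ ⊢
  intro x hx u hu l hl
  have hxW : x ∉ W := fun hxW => h₂ x hx x hxW [] (openWalk_nil hl.left_notMem)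
  obtain ⟨v, hv, l', hl', hS⟩ := hl.exists_prefix_isChain_union (Y ∪ W) hu
  by_cases hvW : v ∈ W
  · exact h₂ x hx v hvW l' hl'
  · exact h₁ x hx v (hv.resolve_right hvW) l'
      ((hl'.union_of_isChain hS Set.subset_union_right hxW hvW).mono
        (ancSet_mono Set.subset_union_right) subset_rfl)

theorem DSep.intersection {X Y W Z : Set V} (hXY : Disjoint X Y) (hXW : Disjoint X W)
    (hYW : Disjoint Y W) (h₁ : DSep E H X Y (W ∪ Z)) (h₂ : DSep E H X W (Y ∪ Z)) :
    DSep E H X (Y ∪ W) Z := by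
  rw [dSep_iff_forall_not_openWalk] at h₁ h₂ ⊢
  intro x hx u hu l hl
  obtain ⟨v, hv, l', hl', hS⟩ := hl.exists_prefix_isChain_union (Y ∪ W) hu
  rcases hv with hvY | hvW
  · exact h₁ x hx v hvY l'
      ((hl'.union_of_isChain hS Set.subset_union_right (hXW.notMem_of_mem_left hx)
        (hYW.notMem_of_mem_left hvY)).mono (ancSet_mono Set.subset_union_right) subset_rfl)
  · exact h₂ x hx v hvW l'
      ((hl'.union_of_isChain hS Set.subset_union_left (hXY.notMem_of_mem_left hx)
        (hYW.notMem_of_mem_right hvW)).mono (ancSet_mono Set.subset_union_right) subset_rfl)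

theorem DSep.union_right {X Y W Z : Set V} (h₁ : DSep E H X Y Z) (h₂ : DSep E H X W Z) :
    DSep E H X (Y ∪ W) Z :=
  fun x hx _ hu => hu.elim (h₁ x hx _) (h₂ x hx _)

end Walks

theorem dSep_compositional_graphoid_general {V : Type*}
    (E : V → V → Prop) (H : Set (Set V)) :
    (∀ X Y Z : Set V, DSep E H X Y Z → DSep E H Y X Z) ∧
    (∀ X Y W Z : Set V, DSep E H X (Y ∪ W) Z → DSep E H X Y Z) ∧
    (∀ X Y W Z : Set V, DSep E H X (Y ∪ W) Z → DSep E H X Y (W ∪ Z)) ∧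
    (∀ X Y W Z : Set V,
      DSep E H X Y (W ∪ Z) → DSep E H X W Z → DSep E H X (Y ∪ W) Z) ∧
    (∀ X Y W Z : Set V, Disjoint X Y → Disjoint X W → Disjoint X Z →
      Disjoint Y W → Disjoint Y Z → Disjoint W Z →
      DSep E H X Y (W ∪ Z) → DSep E H X W (Y ∪ Z) → DSep E H X (Y ∪ W) Z) ∧
    (∀ X Y W Z : Set V, DSep E H X Y Z → DSep E H X W Z → DSep E H X (Y ∪ W) Z) :=
  ⟨fun _ _ _ => DSep.symm,
    fun _ _ _ _ => DSep.mono_right Set.subset_union_left,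
    fun _ _ _ _ => DSep.weak_union,
    fun _ _ _ _ => DSep.contraction,
    fun _ _ _ _ hXY hXW _ hYW _ _ => DSep.intersection hXY hXW hYW,
    fun _ _ _ _ => DSep.union_right⟩

/-- d-separation in a HEDG satisfies the compositional graphoid
axioms: symmetry, decomposition, weak union, contraction, intersection (for pairwise
disjoint sets) and composition. -/
theorem dSep_compositional_graphoid {V : Type*} [Fintype V]
    (E : V → V → Prop) (H : Set (Set V)) (hH : IsSimplicial H) :
    (∀ X Y Z : Set V, DSep E H X Y Z → DSep E H Y X Z) ∧
    (∀ X Y W Z : Set V, DSep E H X (Y ∪ W) Z → DSep E H X Y Z) ∧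
    (∀ X Y W Z : Set V, DSep E H X (Y ∪ W) Z → DSep E H X Y (W ∪ Z)) ∧
    (∀ X Y W Z : Set V,
      DSep E H X Y (W ∪ Z) → DSep E H X W Z → DSep E H X (Y ∪ W) Z) ∧
    (∀ X Y W Z : Set V, Disjoint X Y → Disjoint X W → Disjoint X Z →
      Disjoint Y W → Disjoint Y Z → Disjoint W Z →
      DSep E H X Y (W ∪ Z) → DSep E H X W (Y ∪ Z) → DSep E H X (Y ∪ W) Z) ∧
    (∀ X Y W Z : Set V, DSep E H X Y Z → DSep E H X W Z → DSep E H X (Y ∪ W) Z) :=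
  dSep_compositional_graphoid_general E H

end HedgPaper
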